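/- (Lemma 4) With the setup of Section 4 (genus g > 0, distinct rational places P₁, …, P_s, P_∞, positive divisor D of degree 2g with supp(D) ∩ {P_∞, P₂, …, P_s} = ∅, elements β_j^{(i)} chosen as in Lemma 3, and w₁, …, w_g a basis of L(D − P₁) with ν_{P_∞}(w_f) = n_f pairwise distinct, ν_{P₁}(w_f) ≥ 1 − ν_{P₁}(D), ν_{P_i}(w_f) ≥ 0 for 2 ≤ i ≤ s), the system {w₁, …, w_g} ∪ {β_j^{(i)} : 1 ≤ i ≤ s, j ≥ 1} is linearly independent over F_q. -/

import Mathlib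

open scoped BigOperators

/-- An algebraic function field `F` of one variable over the full constant field `K`,
presented through the set of its places: each place `P` has a normalized discrete
valuation `v P` (its value on `0` is irrelevant/junk) and a degree `deg P ≥ 1`.
The axioms are the standard facts: multiplicativity and the ultrametric inequality of
valuations, triviality on constants, finiteness of the support of a principal divisor,
the degree formula `deg(div f) = 0`, the full-constant-field property, and the fact
that places of degree one have residue field `K`. -/
structure FFPlaces (K F : Type*) [Field K] [Field F] [Algebra K F] where
  Place : Type
  v : Place → F → ℤ
  deg : Place → ℕ
  deg_pos : ∀ P, 0 < deg P
  v_mul : ∀ (P) (x y : F), x ≠ 0 → y ≠ 0 → v P (x * y) = v P x + v P y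
  v_add : ∀ (P) (x y : F), x ≠ 0 → y ≠ 0 → x + y ≠ 0 → min (v P x) (v P y) ≤ v P (x + y)
  v_algebraMap : ∀ (P) (c : K), c ≠ 0 → v P (algebraMap K F c) = 0
  finite_support : ∀ f : F, f ≠ 0 → {P | v P f ≠ 0}.Finite
  degree_formula : ∀ f : F, f ≠ 0 → (∑ᶠ P, (deg P : ℤ) * v P f) = 0
  full_constants : ∀ f : F, f ≠ 0 → (∀ P, 0 ≤ v P f) → ∃ c : K, f = algebraMap K F c
  residue_one : ∀ P, deg P = 1 → ∀ f g : F, f ≠ 0 → g ≠ 0 → v P f = v P g →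
      ∃ c : K, f = algebraMap K F c * g ∨ v P f < v P (f - algebraMap K F c * g)

namespace FFPlaces

variable {K F : Type*} [Field K] [Field F] [Algebra K F]

/-- The degree of a divisor (a finitely supported `ℤ`-valued function on places). -/
def degD (FF : FFPlaces K F) (D : FF.Place →₀ ℤ) : ℤ :=
  ∑ P ∈ D.support, (FF.deg P : ℤ) * D P

/-- The Riemann–Roch space `L(D) = {f ∈ F* : div f + D ≥ 0} ∪ {0}` of a divisor `D`,
as a `K`-subspace of `F`. -/
def RR (FF : FFPlaces K F) (D : FF.Place →₀ ℤ) : Submodule K F where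
  carrier := {f | f = 0 ∨ ∀ P, -(D P) ≤ FF.v P f}
  zero_mem' := Or.inl rfl
  add_mem' := by
    intro a b ha hb
    simp only [Set.mem_setOf_eq] at *
    by_cases ha0 : a = 0
    · simpa [ha0] using hb
    by_cases hb0 : b = 0
    · simpa [hb0] using ha
    by_cases hab : a + b = 0
    · exact Or.inl hab
    have ha' := ha.resolve_left ha0
    have hb' := hb.resolve_left hb0
    exact Or.inr fun P =>
      le_trans (le_min (ha' P) (hb' P)) (FF.v_add P a b ha0 hb0 hab)
  smul_mem' := by
    intro c x hx
    simp only [Set.mem_setOf_eq] at *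
    by_cases hc : c = 0
    · left; simp [hc]
    by_cases hx0 : x = 0
    · left; simp [hx0]
    have hx' := hx.resolve_left hx0
    have halg : algebraMap K F c ≠ 0 :=
      (map_ne_zero_iff (algebraMap K F) (RingHom.injective _)).mpr hc
    refine Or.inr fun P => ?_
    rw [Algebra.smul_def, FF.v_mul P _ x halg hx0, FF.v_algebraMap P c hc]
    simpa using hx' P

end FFPlaces

/-!
Take a vanishing combination of the system. At `P i` with `i ≠ 0` the `β i j` have the pairwise
distinct valuations `-j < 0`, while every other member of the system is integral there; at `P 0`
the `β 0 j` have the pairwise distinct valuations `1 - D (P 0) - j`, below the lower bound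
`1 - D (P 0)` of all other members. If some `β i j` had a nonzero coefficient, the one of smallest
valuation at `P i` among them would be the unique term of minimal valuation there, so the sum
could not vanish. What remains is a vanishing combination of the independent `w f`.
-/

namespace FFPlaces

variable {K F : Type*} [Field K] [Field F] [Algebra K F] (FF : FFPlaces K F)

open Finsupp

theorem mem_RR_iff {A : FF.Place →₀ ℤ} {f : F} :
    f ∈ FF.RR A ↔ f = 0 ∨ ∀ P, -(A P) ≤ FF.v P f := Iff.rfl

theorem v_smul (P : FF.Place) {c : K} (hc : c ≠ 0) {x : F} (hx : x ≠ 0) :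
    FF.v P (c • x) = FF.v P x := by
  rw [Algebra.smul_def, FF.v_mul P _ x ((map_ne_zero _).2 hc) hx, FF.v_algebraMap P c hc,
    zero_add]

theorem v_neg (P : FF.Place) {x : F} (hx : x ≠ 0) : FF.v P (-x) = FF.v P x := by
  simpa using FF.v_smul P (neg_ne_zero.2 (one_ne_zero' K)) hx

theorem lt_v_sum (P : FF.Place) {m : ℤ} {ι : Type*} (t : Finset ι) (a : ι → F)
    (h : ∀ i ∈ t, a i ≠ 0 → m < FF.v P (a i)) (hsum : ∑ i ∈ t, a i ≠ 0) :
    m < FF.v P (∑ i ∈ t, a i) := by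
  classical
  induction t using Finset.induction_on with
  | empty => simp at hsum
  | insert i t hi ih =>
    have ih' := ih fun k hk => h k (Finset.mem_insert_of_mem hk)
    have hi' := h i (Finset.mem_insert_self i t)
    rw [Finset.sum_insert hi] at hsum ⊢
    by_cases hai : a i = 0
    · rw [hai, zero_add] at hsum ⊢
      exact ih' hsum
    by_cases ht : ∑ k ∈ t, a k = 0
    · simpa only [ht, add_zero] using hi' hai
    exact (lt_min (hi' hai) (ih' ht)).trans_le (FF.v_add P _ _ hai ht hsum)

theorem sum_ne_zero_of_forall_v_lt (P : FF.Place) {ι : Type*} {t : Finset ι} {a : ι → F}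
    {i₀ : ι} (hi₀ : i₀ ∈ t) (h0 : a i₀ ≠ 0)
    (h : ∀ i ∈ t, i ≠ i₀ → a i ≠ 0 → FF.v P (a i₀) < FF.v P (a i)) :
    ∑ i ∈ t, a i ≠ 0 := by
  classical
  rw [← Finset.add_sum_erase t a hi₀]
  intro hz
  have hrest : ∑ i ∈ t.erase i₀, a i = -a i₀ := eq_neg_of_add_eq_zero_right hz
  have hlt := FF.lt_v_sum P (t.erase i₀) a
    (fun i hi => h i (Finset.mem_of_mem_erase hi) (Finset.ne_of_mem_erase hi))
    (hrest ▸ neg_ne_zero.2 h0)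
  rw [hrest, FF.v_neg P h0] at hlt
  exact lt_irrefl _ hlt

structure IsSeparatedAt {ι J : Type*} (Q : FF.Place) (u : ι → F) (b : J → ι) (e : ℤ) :
    Prop where
  ne_zero : ∀ j, u (b j) ≠ 0
  injective : Function.Injective fun j => FF.v Q (u (b j))
  v_lt : ∀ j, FF.v Q (u (b j)) < e
  le_v : ∀ x ∉ Set.range b, u x ≠ 0 → e ≤ FF.v Q (u x)

variable {FF}

theorem IsSeparatedAt.coeff_eq_zero {ι J : Type*} {Q : FF.Place} {u : ι → F} {b : J → ι}
    {e : ℤ} (hsep : FF.IsSeparatedAt Q u b e) {t : Finset ι} {c : ι → K}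
    (hsum : ∑ x ∈ t, c x • u x = 0) (j : J) (hj : b j ∈ t) : c (b j) = 0 := by
  classical
  by_contra hc
  obtain ⟨x₀, hx₀, hmin⟩ := (t.filter fun x => x ∈ Set.range b ∧ c x ≠ 0).exists_min_image
    (fun x => FF.v Q (u x)) ⟨b j, by simp [hj, hc]⟩
  obtain ⟨hx₀t, ⟨j₀, rfl⟩, hc₀⟩ := Finset.mem_filter.1 hx₀
  refine FF.sum_ne_zero_of_forall_v_lt Q hx₀t (smul_ne_zero hc₀ (hsep.ne_zero j₀))
    (fun x hxt hx hax => ?_) hsum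
  have hcx : c x ≠ 0 := left_ne_zero_of_smul hax
  have hux : u x ≠ 0 := right_ne_zero_of_smul hax
  rw [FF.v_smul Q hc₀ (hsep.ne_zero j₀), FF.v_smul Q hcx hux]
  by_cases hxb : x ∈ Set.range b
  · obtain ⟨j', rfl⟩ := hxb
    exact (hmin _ (by simp [hxt, hcx])).lt_of_ne fun h => hx (congrArg b (hsep.injective h).symm)
  · exact (hsep.v_lt j₀).trans_le (hsep.le_v x hxb hux)

theorem IsSeparatedAt.of_v_eq_sub {ι : Type*} {Q : FF.Place} {u : ι → F}
    {b : {j : ℕ // 1 ≤ j} → ι} {e : ℤ} (hb : ∀ j, u (b j) ≠ 0 ∧ FF.v Q (u (b j)) = e - j)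
    (hle : ∀ x ∉ Set.range b, u x ≠ 0 → e ≤ FF.v Q (u x)) : FF.IsSeparatedAt Q u b e where
  ne_zero j := (hb j).1
  injective j j' h := by
    simp only [(hb _).2, sub_right_inj, Nat.cast_inj] at h
    exact Subtype.ext h
  v_lt j := by
    rw [(hb j).2]
    linarith [j.2]
  le_v := hle

theorem sub_le_v_of_mem_RR {A B : FF.Place →₀ ℤ} {Q R : FF.Place} {m : ℤ} {f : F}
    (hf : f ∈ FF.RR (A + single Q m - B)) (hf0 : f ≠ 0) (hR : R ≠ Q) :
    B R - A R ≤ FF.v R f := by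
  have hbound := (FF.mem_RR_iff.1 hf).resolve_left hf0 R
  simp [hR.symm] at hbound
  linarith

theorem v_eq_of_mem_RR_of_not_mem_RR {A B : FF.Place →₀ ℤ} {Q : FF.Place} {m : ℤ} {f : F}
    (hf : f ∈ FF.RR (A + single Q m - B)) (hf' : f ∉ FF.RR (A + single Q (m - 1) - B)) :
    f ≠ 0 ∧ FF.v Q f = B Q - A Q - m := by
  have hf0 : f ≠ 0 := fun h => hf' (h ▸ zero_mem _)
  have hbound := (FF.mem_RR_iff.1 hf).resolve_left hf0
  refine ⟨hf0, le_antisymm ?_ ?_⟩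
  · by_contra hlt
    refine hf' (FF.mem_RR_iff.2 (Or.inr fun R => ?_))
    by_cases hR : R = Q
    · subst hR
      simp only [coe_sub, coe_add, Pi.sub_apply, Pi.add_apply, single_eq_same]
      linarith
    · simpa [Ne.symm hR] using hbound R
  · have hQ := hbound Q
    simp only [coe_sub, coe_add, Pi.sub_apply, Pi.add_apply, single_eq_same] at hQ
    linarith

end FFPlaces

section Lemma4

open Finsupp

variable {Fq F : Type*} [Field Fq] [Field F] [Algebra Fq F] {FF : FFPlaces Fq F} {s g : ℕ}
  [NeZero s] {P : Fin s → FF.Place} {D : FF.Place →₀ ℤ} {β : Fin s → ℕ → F} {w : Fin g → F}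

theorem isSeparatedAt_zero (hP : Function.Injective P) (h10 : (1 : Fin s) ≠ 0)
    (hβ1 : ∀ j : ℕ, 1 ≤ j →
      β 0 j ∈ FF.RR (D + single (P 0) ((j : ℤ) - 1) - single (P 1) ((j : ℤ) - 1)) ∧
      β 0 j ∉ FF.RR (D + single (P 0) ((j : ℤ) - 2) - single (P 1) ((j : ℤ) - 1)))
    (hβi : ∀ i : Fin s, i ≠ 0 → ∀ j : ℕ, 1 ≤ j →
      β i j ∈ FF.RR (D + single (P i) (j : ℤ) - single (P 0) (j : ℤ)))
    (hw1 : ∀ f, 1 - D (P 0) ≤ FF.v (P 0) (w f)) :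
    FF.IsSeparatedAt (P 0) (Sum.elim w fun p : Fin s × {j : ℕ // 1 ≤ j} => β p.1 p.2)
      (fun j => Sum.inr (0, j)) (1 - D (P 0)) := by
  refine .of_v_eq_sub (fun ⟨j, hj⟩ => ?_) ?_
  · obtain ⟨hmem, hnot⟩ := hβ1 j hj
    rw [show (j : ℤ) - 2 = (j - 1) - 1 by ring] at hnot
    obtain ⟨hne, hv⟩ := FF.v_eq_of_mem_RR_of_not_mem_RR hmem hnot
    refine ⟨hne, hv.trans ?_⟩
    rw [single_eq_of_ne' (hP.ne h10)]
    ring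
  · rintro (f | ⟨i, j, hj⟩) hx hne
    · exact hw1 f
    · have hi : i ≠ 0 := by rintro rfl; exact hx ⟨⟨j, hj⟩, rfl⟩
      have := FF.sub_le_v_of_mem_RR (hβi i hi j hj) hne (hP.ne hi).symm
      rw [single_eq_same] at this
      exact le_trans (by omega) this

theorem isSeparatedAt_of_ne_zero (hP : Function.Injective P) {i : Fin s} (hi : i ≠ 0)
    (hDi : D (P i) = 0)
    (hβ1 : ∀ j : ℕ, 1 ≤ j →
      β 0 j ∈ FF.RR (D + single (P 0) ((j : ℤ) - 1) - single (P 1) ((j : ℤ) - 1)))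
    (hβi : ∀ i : Fin s, i ≠ 0 → ∀ j : ℕ, 1 ≤ j →
      β i j ∈ FF.RR (D + single (P i) (j : ℤ) - single (P 0) (j : ℤ)) ∧
      β i j ∉ FF.RR (D + single (P i) ((j : ℤ) - 1) - single (P 0) (j : ℤ)))
    (hwi : ∀ f, 0 ≤ FF.v (P i) (w f)) :
    FF.IsSeparatedAt (P i) (Sum.elim w fun p : Fin s × {j : ℕ // 1 ≤ j} => β p.1 p.2)
      (fun j => Sum.inr (i, j)) 0 := by
  refine .of_v_eq_sub (fun ⟨j, hj⟩ => ?_) ?_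
  · obtain ⟨hne, hv⟩ := FF.v_eq_of_mem_RR_of_not_mem_RR (hβi i hi j hj).1 (hβi i hi j hj).2
    refine ⟨hne, ?_⟩
    simp [hv, hP.ne hi, hDi]
  · rintro (f | ⟨i', j, hj⟩) hx hne
    · exact hwi f
    · have hi' : i' ≠ i := by rintro rfl; exact hx ⟨⟨j, hj⟩, rfl⟩
      by_cases hi'0 : i' = 0
      · subst hi'0
        have := FF.sub_le_v_of_mem_RR (hβ1 j hj) hne (hP.ne hi)
        have hsingle : 0 ≤ single (P 1) ((j : ℤ) - 1) (P i) := single_nonneg.2 (by omega) (P i)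
        simp only [hDi, sub_zero] at this
        exact hsingle.trans this
      · have := FF.sub_le_v_of_mem_RR (hβi i' hi'0 j hj).1 hne (hP.ne hi'.symm)
        simpa [hDi, hP.ne hi] using this

end Lemma4

open Finsupp in
/-- `P 0, …, P (s-1)` are the paper's `P₁, …, P_s`, and `β i j` is its `β_j^{(i+1)}`. -/
theorem lemma4_linearIndependent_general (Fq F : Type*) [Field Fq] [Field F]
    [Algebra Fq F] (FF : FFPlaces Fq F) (g : ℕ)
    (s : ℕ) [NeZero s] (hs2 : 2 ≤ s) (P : Fin s → FF.Place)
    (hP : Function.Injective P)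
    (D : FF.Place →₀ ℤ)
    (hDsupp : ∀ i : Fin s, i ≠ 0 → D (P i) = 0)
    (β : Fin s → ℕ → F)
    (hβ1 : ∀ j : ℕ, 1 ≤ j →
      β 0 j ∈ FF.RR (D + single (P 0) ((j : ℤ) - 1) - single (P 1) ((j : ℤ) - 1)) ∧
      β 0 j ∉ FF.RR (D + single (P 0) ((j : ℤ) - 2) - single (P 1) ((j : ℤ) - 1)))
    (hβi : ∀ i : Fin s, i ≠ 0 → ∀ j : ℕ, 1 ≤ j →
      β i j ∈ FF.RR (D + single (P i) (j : ℤ) - single (P 0) (j : ℤ)) ∧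
      β i j ∉ FF.RR (D + single (P i) (j : ℤ) - single (P 0) ((j : ℤ) + 1)) ∧
      β i j ∉ FF.RR (D + single (P i) ((j : ℤ) - 1) - single (P 0) (j : ℤ)))
    (w : Fin g → F)
    (hwli : LinearIndependent Fq w)
    (hw1 : ∀ f, 1 - D (P 0) ≤ FF.v (P 0) (w f))
    (hwi : ∀ (i : Fin s), i ≠ 0 → ∀ f, 0 ≤ FF.v (P i) (w f)) :
    LinearIndependent Fq
      (Sum.elim w (fun p : Fin s × {j : ℕ // 1 ≤ j} => β p.1 p.2)) := by
  classical
  have h10 : (1 : Fin s) ≠ 0 := by simp [Fin.ext_iff, Nat.mod_eq_of_lt hs2]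
  have hsep : ∀ i, ∃ e, FF.IsSeparatedAt (P i)
      (Sum.elim w fun p : Fin s × {j : ℕ // 1 ≤ j} => β p.1 p.2) (fun j => Sum.inr (i, j)) e := by
    intro i
    by_cases hi : i = 0
    · subst hi
      exact ⟨_, isSeparatedAt_zero hP h10 hβ1 (fun i hi j hj => (hβi i hi j hj).1) hw1⟩
    · exact ⟨0, isSeparatedAt_of_ne_zero hP hi (hDsupp i hi) (fun j hj => (hβ1 j hj).1)
        (fun i hi j hj => ⟨(hβi i hi j hj).1, (hβi i hi j hj).2.2⟩) (hwi i hi)⟩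
  rw [linearIndependent_iff']
  intro t c hsum
  have hβc : ∀ p ∈ t.toRight, c (Sum.inr p) = 0 := fun p hp =>
    (hsep p.1).choose_spec.coeff_eq_zero hsum p.2 (Finset.mem_toRight.1 hp)
  rw [Finset.sum_sum_eq_sum_toLeft_add_sum_toRight,
    Finset.sum_eq_zero (s := t.toRight) fun p hp => by rw [hβc p hp, zero_smul], add_zero] at hsum
  rintro (f | p) hx
  · exact linearIndependent_iff'.mp hwli _ _ hsum f (Finset.mem_toLeft.2 hx)
  · exact hβc p (Finset.mem_toRight.2 hx)

open Finsupp in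
/-- Lemma 4 of the paper. With the setup of Section 4 — genus `g > 0`, distinct rational
places `P 0, …, P (s-1), Pinf` (the paper's `P₁, …, P_s, P_∞`), a positive divisor `D` of
degree `2g` with support avoiding `Pinf, P₂, …, P_s`, elements `β_j^{(i)}` chosen as in
Lemma 3, and `w₁, …, w_g` a basis of `L(D - P₁)` with pairwise distinct valuations
`ν_{Pinf}(w_f) = n_f` — the system `{w₁, …, w_g} ∪ {β_j^{(i)} : 1 ≤ i ≤ s, j ≥ 1}` is
linearly independent over `Fq`. -/
theorem lemma4_linearIndependent (Fq F : Type*) [Field Fq] [Fintype Fq] [Field F]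
    [Algebra Fq F] (FF : FFPlaces Fq F) (g : ℕ) (hg : 0 < g)
    (hRR : ∀ D : FF.Place →₀ ℤ, 2 * (g : ℤ) - 1 ≤ FF.degD D →
      (Module.finrank Fq (FF.RR D) : ℤ) = FF.degD D + 1 - g)
    (s : ℕ) [NeZero s] (hs2 : 2 ≤ s) (P : Fin s → FF.Place)
    (hP : Function.Injective P) (hPdeg : ∀ i, FF.deg (P i) = 1)
    (Pinf : FF.Place) (hPinfdeg : FF.deg Pinf = 1) (hPinfne : ∀ i, Pinf ≠ P i)
    (D : FF.Place →₀ ℤ) (hDpos : ∀ Q, 0 ≤ D Q) (hdegD : FF.degD D = 2 * g)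
    (hDsupp : ∀ i : Fin s, i ≠ 0 → D (P i) = 0) (hDsuppInf : D Pinf = 0)
    (β : Fin s → ℕ → F)
    (hβ1 : ∀ j : ℕ, 1 ≤ j →
      β 0 j ∈ FF.RR (D + single (P 0) ((j : ℤ) - 1) - single (P 1) ((j : ℤ) - 1)) ∧
      β 0 j ∉ FF.RR (D + single (P 0) ((j : ℤ) - 2) - single (P 1) ((j : ℤ) - 1)))
    (hβi : ∀ i : Fin s, i ≠ 0 → ∀ j : ℕ, 1 ≤ j →
      β i j ∈ FF.RR (D + single (P i) (j : ℤ) - single (P 0) (j : ℤ)) ∧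
      β i j ∉ FF.RR (D + single (P i) (j : ℤ) - single (P 0) ((j : ℤ) + 1)) ∧
      β i j ∉ FF.RR (D + single (P i) ((j : ℤ) - 1) - single (P 0) (j : ℤ)))
    (w : Fin g → F) (hwmem : ∀ f, w f ∈ FF.RR (D - single (P 0) 1))
    (hwli : LinearIndependent Fq w)
    (hwspan : Submodule.span Fq (Set.range w) = FF.RR (D - single (P 0) 1))
    (n : Fin g → ℕ) (hn : ∀ f, FF.v Pinf (w f) = (n f : ℤ))
    (hninj : Function.Injective n)
    (hw1 : ∀ f, 1 - D (P 0) ≤ FF.v (P 0) (w f))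
    (hwi : ∀ (i : Fin s), i ≠ 0 → ∀ f, 0 ≤ FF.v (P i) (w f)) :
    LinearIndependent Fq
      (Sum.elim w (fun p : Fin s × {j : ℕ // 1 ≤ j} => β p.1 p.2)) :=
  lemma4_linearIndependent_general Fq F FF g s hs2 P hP D hDsupp β hβ1 hβi w hwli hw1 hwi
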